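/- Let ψ ∈ H¹(ℝ³) and ψ̃ ∈ H¹(ℝ³). Then there exists a universal constant (which can be taken explicit) such that for every k ∈ ℝ³ with k ≠ 0, |⟨ψ, G_·(k) ψ̃⟩_{L²(ℝ³)}| ≤ (1+|k|)/(|k|(1+|k|²)) · (‖ψ‖_{H¹}‖ψ̃‖_{L²} + ‖ψ‖_{L²}‖ψ̃‖_{H¹}), where ⟨ψ, G_·(k) ψ̃⟩ = ∫ dx ψ̄(x) |k|^{-1} e^{-2πi k·x} ψ̃(x). -/

import Mathlib

open MeasureTheory Complex Real
open scoped RealInnerProductSpace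
noncomputable section

abbrev E3 := EuclideanSpace ℝ (Fin 3)

/-- The `L²(ℝ³)` norm of a function. -/
def l2norm {F : Type*} [NormedAddCommGroup F] (f : E3 → F) : ℝ :=
  (eLpNorm f 2 (volume : Measure E3)).toReal

/-- The `H¹(ℝ³)` norm: `‖ψ‖_{H¹}² = ‖ψ‖_{L²}² + ‖∇ψ‖_{L²}²`. -/
def h1norm (f : E3 → ℂ) : ℝ :=
  Real.sqrt (l2norm f ^ 2 + l2norm (fun x => fderiv ℝ f x) ^ 2)

/-!
With `f = conj ψ · ψ̃` the integral equals `|k|⁻¹ 𝓕 f (k)`, and trivially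
`|𝓕 f (k)| ≤ ‖f‖₁ ≤ ‖ψ‖₂ ‖ψ̃‖₂`. Translating `f` by the half period `h = k / (2|k|²)` flips the
sign of `𝓕 f (k)`, so `2 |𝓕 f (k)| ≤ ‖f - f (· + h)‖₁ ≤ |h| ‖∇f‖₁`, that is
`4 |k| |𝓕 f (k)| ≤ ‖ψ‖₂ ‖∇ψ̃‖₂ + ‖ψ̃‖₂ ‖∇ψ‖₂`. Combining the two bounds gives the estimate with
`C = 1`.
-/

open Filter Set
open scoped ComplexConjugate FourierTransform

section Holder

variable {α F G : Type*} [MeasurableSpace α] {μ : Measure α}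
  [NormedAddCommGroup F] [NormedAddCommGroup G] {u : α → F} {v : α → G}

theorem integrable_norm_mul_norm_of_memLp_two (hu : MemLp u 2 μ) (hv : MemLp v 2 μ) :
    Integrable (fun x => ‖u x‖ * ‖v x‖) μ :=
  hu.norm.integrable_mul hv.norm

theorem integral_norm_mul_norm_le_of_memLp_two (hu : MemLp u 2 μ) (hv : MemLp v 2 μ) :
    ∫ x, ‖u x‖ * ‖v x‖ ∂μ ≤ (eLpNorm u 2 μ).toReal * (eLpNorm v 2 μ).toReal := by
  have h2 : ENNReal.ofReal 2 = 2 := by norm_num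
  have := integral_mul_norm_le_Lp_mul_Lq Real.HolderConjugate.two_two
    (h2 ▸ hu.norm) (h2 ▸ hv.norm)
  rw [toReal_eLpNorm hu.1, toReal_eLpNorm hv.1,
    lpNorm_eq_integral_norm_rpow_toReal two_ne_zero ENNReal.ofNat_ne_top hu.1,
    lpNorm_eq_integral_norm_rpow_toReal two_ne_zero ENNReal.ofNat_ne_top hv.1]
  simpa [one_div] using this

end Holder

section Translate

variable {E F : Type*} [NormedAddCommGroup E] [NormedSpace ℝ E]
  [NormedAddCommGroup F] [NormedSpace ℝ F] [CompleteSpace F] {f : E → F}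

theorem norm_sub_le_integral_norm_fderiv_segment (hf : Differentiable ℝ f) {x h : E}
    (hint : IntegrableOn (fun t : ℝ => ‖fderiv ℝ f (x + t • h)‖) (Ioc 0 1)) :
    ‖f (x + h) - f x‖ ≤ ‖h‖ * ∫ t in Ioc (0 : ℝ) 1, ‖fderiv ℝ f (x + t • h)‖ := by
  set g : ℝ → F := fun t => f (x + t • h)
  have hg : ∀ t, HasDerivAt g (fderiv ℝ f (x + t • h) h) t := fun t =>
    (hf _).hasFDerivAt.comp_hasDerivAt t
      (by simpa using ((hasDerivAt_id t).smul_const h).const_add x)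
  have hg' : deriv g = fun t => fderiv ℝ f (x + t • h) h := funext fun t => (hg t).deriv
  have hbound : ∀ t, ‖deriv g t‖ ≤ ‖fderiv ℝ f (x + t • h)‖ * ‖h‖ := fun t => by
    rw [hg']; exact (fderiv ℝ f (x + t • h)).le_opNorm h
  have hdom : IntegrableOn (fun t : ℝ => ‖fderiv ℝ f (x + t • h)‖ * ‖h‖) (Ioc 0 1) :=
    hint.mul_const ‖h‖
  have hderiv_int : IntervalIntegrable (deriv g) volume 0 1 :=
    (intervalIntegrable_iff_integrableOn_Ioc_of_le zero_le_one).2 <|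
      hdom.mono' (stronglyMeasurable_deriv g).aestronglyMeasurable (Eventually.of_forall hbound)
  have hftc : ∫ t in (0 : ℝ)..1, deriv g t = f (x + h) - f x := by
    rw [intervalIntegral.integral_eq_sub_of_hasDerivAt (fun t _ => (hg t).deriv ▸ hg t)
      hderiv_int]
    simp [g]
  calc ‖f (x + h) - f x‖ = ‖∫ t in Ioc (0 : ℝ) 1, deriv g t‖ := by
        rw [← hftc, intervalIntegral.integral_of_le zero_le_one]
    _ ≤ ∫ t in Ioc (0 : ℝ) 1, ‖fderiv ℝ f (x + t • h)‖ * ‖h‖ :=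
        norm_integral_le_of_norm_le hdom (Eventually.of_forall hbound)
    _ = ‖h‖ * ∫ t in Ioc (0 : ℝ) 1, ‖fderiv ℝ f (x + t • h)‖ := by
        rw [integral_mul_const, mul_comm]

theorem integral_norm_sub_comp_add_le [MeasurableSpace E] [BorelSpace E]
    [SecondCountableTopology E] {μ : Measure E} [SFinite μ] [μ.IsAddRightInvariant]
    (hf : Differentiable ℝ f) (hD : Integrable (fun x => ‖fderiv ℝ f x‖) μ) (h : E) :
    ∫ x, ‖f (x + h) - f x‖ ∂μ ≤ ‖h‖ * ∫ x, ‖fderiv ℝ f x‖ ∂μ := by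
  set ν := (volume : Measure ℝ).restrict (Ioc 0 1)
  set D : ℝ × E → ℝ := fun p => ‖fderiv ℝ f (p.2 + p.1 • h)‖
  have hD_meas : Measurable D :=
    (measurable_fderiv ℝ f).norm.comp (measurable_snd.add (measurable_fst.smul_const h))
  have hD_slice : ∀ t : ℝ, ∫ x, D (t, x) ∂μ = ∫ x, ‖fderiv ℝ f x‖ ∂μ := fun t =>
    integral_add_right_eq_self (fun x => ‖fderiv ℝ f x‖) (t • h)
  have hD_int : Integrable D (ν.prod μ) := by
    refine (integrable_prod_iff hD_meas.aestronglyMeasurable).2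
      ⟨Eventually.of_forall fun t => hD.comp_add_right (t • h), ?_⟩
    simp only [norm_norm, D, hD_slice]
    exact integrable_const _
  have hD_swap : ∫ x, ∫ t, D (t, x) ∂ν ∂μ = ∫ x, ‖fderiv ℝ f x‖ ∂μ := by
    rw [← integral_integral_swap hD_int]
    simp [hD_slice, ν]
  calc ∫ x, ‖f (x + h) - f x‖ ∂μ ≤ ∫ x, ‖h‖ * ∫ t, D (t, x) ∂ν ∂μ := by
        refine integral_mono_of_nonneg (Eventually.of_forall fun x => norm_nonneg _)
          (hD_int.integral_prod_right.const_mul ‖h‖) ?_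
        filter_upwards [hD_int.prod_left_ae] with x hx
        exact norm_sub_le_integral_norm_fderiv_segment hf hx
    _ = ‖h‖ * ∫ x, ‖fderiv ℝ f x‖ ∂μ := by rw [integral_const_mul, hD_swap]

end Translate

section Fourier

variable {V E : Type*} [NormedAddCommGroup V] [InnerProductSpace ℝ V] [MeasurableSpace V]
  [BorelSpace V] [FiniteDimensional ℝ V] [NormedAddCommGroup E] [NormedSpace ℂ E]
  {f : V → E}

theorem norm_fourier_le_integral_norm (w : V) : ‖𝓕 f w‖ ≤ ∫ v, ‖f v‖ :=
  VectorFourier.norm_fourierIntegral_le_integral_norm _ _ _ _ _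

theorem mul_norm_fourier_le_integral_norm_fderiv [CompleteSpace E] (hf : Differentiable ℝ f)
    (hfi : Integrable f) (hD : Integrable (fun v => ‖fderiv ℝ f v‖)) {w : V} (hw : w ≠ 0) :
    4 * ‖w‖ * ‖𝓕 f w‖ ≤ ∫ v, ‖fderiv ℝ f v‖ := by
  set h : V := (1 / (2 * ‖w‖ ^ 2) : ℝ) • w
  have hw' : 0 < ‖w‖ := norm_pos_iff.2 hw
  have hh : ‖h‖ = 1 / (2 * ‖w‖) := by
    rw [norm_smul, Real.norm_of_nonneg (by positivity)]
    field_simp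
  have htranslate : ‖𝓕 f w‖ ≤ 1 / 2 * ∫ v, ‖f (v + h) - f v‖ := by
    rw [Real.fourier_eq, fourierIntegral_eq_half_sub_half_period_translate hw hfi, norm_smul]
    refine mul_le_mul (by norm_num) ?_ (norm_nonneg _) (by norm_num)
    refine (norm_integral_le_integral_norm _).trans_eq (integral_congr_ae ?_)
    filter_upwards with v
    rw [Circle.norm_smul, norm_sub_rev]
  have hshift := integral_norm_sub_comp_add_le hf hD h
  rw [hh] at hshift
  calc 4 * ‖w‖ * ‖𝓕 f w‖ ≤ 4 * ‖w‖ * (1 / 2 * (1 / (2 * ‖w‖) * ∫ v, ‖fderiv ℝ f v‖)) := by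
        gcongr; exact htranslate.trans (by gcongr)
    _ = ∫ v, ‖fderiv ℝ f v‖ := by field_simp; ring

theorem integral_conj_mul_exp_eq_fourier (ψ ψt : V → ℂ) (k : V) :
    ∫ x, conj (ψ x) * ((‖k‖⁻¹ : ℝ) * Complex.exp (-(2 * π * I) * (⟪k, x⟫ : ℝ))) * ψt x =
      (‖k‖⁻¹ : ℝ) * 𝓕 (fun x => conj (ψ x) * ψt x) k := by
  rw [Real.fourier_eq', ← integral_const_mul]
  congr 1 with x
  rw [real_inner_comm, smul_eq_mul]
  push_cast
  rw [show -(2 * π * I) * (⟪x, k⟫ : ℂ) = -2 * π * ⟪x, k⟫ * I by ring]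
  ring

end Fourier

theorem norm_fderiv_conj_mul_le {E : Type*} [NormedAddCommGroup E] [NormedSpace ℝ E]
    {φ ψ : E → ℂ} {x : E} (hφ : DifferentiableAt ℝ φ x) (hψ : DifferentiableAt ℝ ψ x) :
    ‖fderiv ℝ (fun y => conj (φ y) * ψ y) x‖ ≤
      ‖φ x‖ * ‖fderiv ℝ ψ x‖ + ‖ψ x‖ * ‖fderiv ℝ φ x‖ := by
  have hconj :
      HasFDerivAt (fun y => conj (φ y)) ((conjCLE : ℂ →L[ℝ] ℂ).comp (fderiv ℝ φ x)) x :=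
    conjCLE.hasFDerivAt.comp x hφ.hasFDerivAt
  have hprod : HasFDerivAt (fun y => conj (φ y) * ψ y)
      (conj (φ x) • fderiv ℝ ψ x + ψ x • (conjCLE : ℂ →L[ℝ] ℂ).comp (fderiv ℝ φ x)) x :=
    hconj.mul hψ.hasFDerivAt
  have hcomp : ‖(conjCLE : ℂ →L[ℝ] ℂ).comp (fderiv ℝ φ x)‖ ≤ ‖fderiv ℝ φ x‖ :=
    (ContinuousLinearMap.opNorm_comp_le _ _).trans_eq (by rw [conjCLE_norm, one_mul])
  rw [hprod.fderiv]
  calc _ ≤ ‖conj (φ x) • fderiv ℝ ψ x‖ + ‖ψ x • (conjCLE : ℂ →L[ℝ] ℂ).comp (fderiv ℝ φ x)‖ :=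
        norm_add_le _ _
    _ ≤ ‖φ x‖ * ‖fderiv ℝ ψ x‖ + ‖ψ x‖ * ‖fderiv ℝ φ x‖ := by
        refine add_le_add ((norm_smul_le (conj (φ x)) (fderiv ℝ ψ x)).trans_eq ?_) ?_
        · rw [Complex.norm_conj]
        · exact (norm_smul_le (ψ x) ((conjCLE : ℂ →L[ℝ] ℂ).comp (fderiv ℝ φ x))).trans
            (mul_le_mul_of_nonneg_left hcomp (norm_nonneg _))

theorem inv_mul_le_of_le_of_mul_le {K I M : ℝ} (hK : 0 < K) (hM : 0 ≤ M) (hI : I ≤ M)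
    (hKI : 4 * K * I ≤ M) : K⁻¹ * I ≤ (1 + K) / (K * (1 + K ^ 2)) * M := by
  have hrhs : (1 + K) / (K * (1 + K ^ 2)) * M = K⁻¹ * ((1 + K) * M / (1 + K ^ 2)) := by
    field_simp
  rw [hrhs]
  gcongr
  rw [le_div_iff₀ (by positivity)]
  nlinarith [mul_le_mul_of_nonneg_left hKI hK.le]

section H1

variable {ψ ψt : E3 → ℂ}

theorem l2norm_nonneg {F : Type*} [NormedAddCommGroup F] (f : E3 → F) : 0 ≤ l2norm f :=
  ENNReal.toReal_nonneg

theorem l2norm_le_h1norm (f : E3 → ℂ) : l2norm f ≤ h1norm f :=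
  Real.le_sqrt_of_sq_le (le_add_of_nonneg_right (sq_nonneg _))

theorem l2norm_fderiv_le_h1norm (f : E3 → ℂ) : l2norm (fun x => fderiv ℝ f x) ≤ h1norm f :=
  Real.le_sqrt_of_sq_le (le_add_of_nonneg_left (sq_nonneg _))

theorem integrable_conj_mul (hψ : MemLp ψ 2) (hψt : MemLp ψt 2) :
    Integrable (fun x => conj (ψ x) * ψt x) :=
  hψ.star.integrable_mul hψt

theorem integral_norm_conj_mul_le (hψ : MemLp ψ 2) (hψt : MemLp ψt 2) :
    ∫ x, ‖conj (ψ x) * ψt x‖ ≤ l2norm ψ * l2norm ψt := by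
  simpa only [norm_mul, Complex.norm_conj, l2norm] using
    integral_norm_mul_norm_le_of_memLp_two hψ hψt

theorem integrable_norm_fderiv_conj_mul (hψ : Differentiable ℝ ψ) (hψt : Differentiable ℝ ψt)
    (hψ2 : MemLp ψ 2) (hψt2 : MemLp ψt 2) (hDψ2 : MemLp (fun x => fderiv ℝ ψ x) 2)
    (hDψt2 : MemLp (fun x => fderiv ℝ ψt x) 2) :
    Integrable (fun x => ‖fderiv ℝ (fun y => conj (ψ y) * ψt y) x‖) :=
  ((integrable_norm_mul_norm_of_memLp_two hψ2 hDψt2).add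
    (integrable_norm_mul_norm_of_memLp_two hψt2 hDψ2)).mono'
    (measurable_fderiv ℝ _).norm.aestronglyMeasurable
    (Eventually.of_forall fun x => by
      simpa only [norm_norm, Pi.add_apply] using norm_fderiv_conj_mul_le (hψ x) (hψt x))

theorem integral_norm_fderiv_conj_mul_le (hψ : Differentiable ℝ ψ)
    (hψt : Differentiable ℝ ψt) (hψ2 : MemLp ψ 2) (hψt2 : MemLp ψt 2)
    (hDψ2 : MemLp (fun x => fderiv ℝ ψ x) 2) (hDψt2 : MemLp (fun x => fderiv ℝ ψt x) 2) :
    ∫ x, ‖fderiv ℝ (fun y => conj (ψ y) * ψt y) x‖ ≤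
      l2norm ψ * l2norm (fun x => fderiv ℝ ψt x) +
        l2norm ψt * l2norm (fun x => fderiv ℝ ψ x) := by
  have h1 := integrable_norm_mul_norm_of_memLp_two hψ2 hDψt2
  have h2 := integrable_norm_mul_norm_of_memLp_two hψt2 hDψ2
  calc _ ≤ ∫ x, (‖ψ x‖ * ‖fderiv ℝ ψt x‖ + ‖ψt x‖ * ‖fderiv ℝ ψ x‖) :=
        integral_mono_of_nonneg (Eventually.of_forall fun x => norm_nonneg _) (h1.add h2)
          (Eventually.of_forall fun x => norm_fderiv_conj_mul_le (hψ x) (hψt x))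
    _ ≤ _ := by
        rw [integral_add h1 h2]
        exact add_le_add (integral_norm_mul_norm_le_of_memLp_two hψ2 hDψt2)
          (integral_norm_mul_norm_le_of_memLp_two hψt2 hDψ2)

end H1

/-- For `ψ, ψ̃ ∈ H¹(ℝ³)` and every `k ≠ 0`,
`|⟨ψ, G_·(k) ψ̃⟩| ≤ C (1+|k|)/(|k|(1+|k|²)) (‖ψ‖_{H¹}‖ψ̃‖_{L²} + ‖ψ‖_{L²}‖ψ̃‖_{H¹})`,
where `G_x(k) = e^{-2πik·x}/|k|`. -/
theorem stmt_5 :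
    ∃ C > (0 : ℝ), ∀ (ψ ψt : E3 → ℂ),
      Differentiable ℝ ψ → MemLp ψ 2 (volume : Measure E3) →
      MemLp (fun x => fderiv ℝ ψ x) 2 (volume : Measure E3) →
      Differentiable ℝ ψt → MemLp ψt 2 (volume : Measure E3) →
      MemLp (fun x => fderiv ℝ ψt x) 2 (volume : Measure E3) →
      ∀ k : E3, k ≠ 0 →
        ‖∫ x : E3, (starRingEnd ℂ) (ψ x) *
            ((‖k‖⁻¹ : ℝ) * Complex.exp (-(2 * π * Complex.I) * (⟪k, x⟫ : ℝ))) * ψt x‖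
          ≤ C * ((1 + ‖k‖) / (‖k‖ * (1 + ‖k‖ ^ 2))) *
              (h1norm ψ * l2norm ψt + l2norm ψ * h1norm ψt) := by
  refine ⟨1, one_pos, fun ψ ψt hψ hψ2 hDψ2 hψt hψt2 hDψt2 k hk => ?_⟩
  set f : E3 → ℂ := fun x => conj (ψ x) * ψt x
  have hl2 := l2norm_le_h1norm ψ
  have hl2t := l2norm_le_h1norm ψt
  have hl2D := l2norm_fderiv_le_h1norm ψ
  have hl2Dt := l2norm_fderiv_le_h1norm ψt
  have h0 := l2norm_nonneg ψ
  have h0t := l2norm_nonneg ψt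
  rw [integral_conj_mul_exp_eq_fourier, norm_mul, Complex.norm_real,
    Real.norm_of_nonneg (inv_nonneg.2 (norm_nonneg k)), one_mul]
  refine inv_mul_le_of_le_of_mul_le (norm_pos_iff.2 hk)
    (add_nonneg (mul_nonneg (h0.trans hl2) h0t) (mul_nonneg h0 (h0t.trans hl2t))) ?_ ?_
  · calc ‖𝓕 f k‖ ≤ ∫ x, ‖f x‖ := norm_fourier_le_integral_norm k
      _ ≤ l2norm ψ * l2norm ψt := integral_norm_conj_mul_le hψ2 hψt2
      _ ≤ _ := by nlinarith
  · calc 4 * ‖k‖ * ‖𝓕 f k‖ ≤ ∫ x, ‖fderiv ℝ f x‖ :=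
        mul_norm_fourier_le_integral_norm_fderiv (fun x => (hψ x).star.mul (hψt x))
          (integrable_conj_mul hψ2 hψt2)
          (integrable_norm_fderiv_conj_mul hψ hψt hψ2 hψt2 hDψ2 hDψt2) hk
      _ ≤ _ := integral_norm_fderiv_conj_mul_le hψ hψt hψ2 hψt2 hDψ2 hDψt2
      _ ≤ _ := by nlinarith [l2norm_nonneg (fun x => fderiv ℝ ψ x)]
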